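/- arXiv:1502.06967 — 7 statements merged into one kernel-verified Lean document; each statement's English description precedes it below -/
import Mathlib

section
/- Suppose |u₁⟩, |u₂⟩ are unit vectors with |⟨u₁|u₂⟩| ≤ ω, and |v₁⟩, |v₂⟩ are unit vectors with |⟨u_j|v_j⟩| ≥ 1 - δ for j = 1, 2. Then |⟨v₁|v₂⟩| ≤ ω + √(10δ). -/
open scoped InnerProductSpace

/-! Write `vⱼ = ⟪uⱼ, vⱼ⟫ uⱼ + wⱼ`. By Pythagoras `‖wⱼ‖² = 1 - |⟪uⱼ, vⱼ⟫|² ≤ 2δ`, and replacing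
each `vⱼ` by its projection onto `uⱼ` changes the overlap by at most `‖w₁‖ + ‖w₂‖`, while the
overlap of the projections is at most `|⟪u₁, u₂⟫|`. Hence `|⟪v₁, v₂⟫| ≤ ω + 2√(2δ) ≤ ω + √(10δ)`. -/

section

variable {𝕜 E : Type*} [RCLike 𝕜] [NormedAddCommGroup E] [InnerProductSpace 𝕜 E]

theorem norm_inner_le_norm_inner_add_norm_sub_add_norm_sub {x₁ x₂ y₁ y₂ : E}
    (hx₁ : ‖x₁‖ ≤ 1) (hy₂ : ‖y₂‖ ≤ 1) :
    ‖⟪y₁, y₂⟫_𝕜‖ ≤ ‖⟪x₁, x₂⟫_𝕜‖ + ‖y₁ - x₁‖ + ‖y₂ - x₂‖ := by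
  have hsplit : ⟪y₁, y₂⟫_𝕜 = ⟪x₁, x₂⟫_𝕜 + ⟪y₁ - x₁, y₂⟫_𝕜 + ⟪x₁, y₂ - x₂⟫_𝕜 := by
    simp only [inner_sub_left, inner_sub_right]
    ring
  have h₁ : ‖⟪y₁ - x₁, y₂⟫_𝕜‖ ≤ ‖y₁ - x₁‖ :=
    (norm_inner_le_norm _ _).trans (mul_le_of_le_one_right (norm_nonneg _) hy₂)
  have h₂ : ‖⟪x₁, y₂ - x₂⟫_𝕜‖ ≤ ‖y₂ - x₂‖ :=
    (norm_inner_le_norm _ _).trans (mul_le_of_le_one_left (norm_nonneg _) hx₁)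
  rw [hsplit]
  linarith [norm_add₃_le (a := ⟪x₁, x₂⟫_𝕜) (b := ⟪y₁ - x₁, y₂⟫_𝕜) (c := ⟪x₁, y₂ - x₂⟫_𝕜)]

theorem norm_inner_smul_smul_le {a b : 𝕜} (ha : ‖a‖ ≤ 1) (hb : ‖b‖ ≤ 1) (x y : E) :
    ‖⟪a • x, b • y⟫_𝕜‖ ≤ ‖⟪x, y⟫_𝕜‖ := by
  rw [inner_smul_left, inner_smul_right, norm_mul, norm_mul, RCLike.norm_conj]
  calc ‖a‖ * (‖b‖ * ‖⟪x, y⟫_𝕜‖) ≤ 1 * (1 * ‖⟪x, y⟫_𝕜‖) := by gcongr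
    _ = ‖⟪x, y⟫_𝕜‖ := by ring

theorem norm_inner_le_one_of_norm_eq_one {u v : E} (hu : ‖u‖ = 1) (hv : ‖v‖ = 1) :
    ‖⟪u, v⟫_𝕜‖ ≤ 1 := by
  simpa [hu, hv] using norm_inner_le_norm (𝕜 := 𝕜) u v

theorem norm_sub_inner_smul_sq {u : E} (hu : ‖u‖ = 1) (v : E) :
    ‖v - ⟪u, v⟫_𝕜 • u‖ ^ 2 = ‖v‖ ^ 2 - ‖⟪u, v⟫_𝕜‖ ^ 2 := by
  rw [norm_sub_sq (𝕜 := 𝕜), inner_smul_right, ← inner_conj_symm v u, RCLike.mul_conj,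
    norm_smul, hu, ← RCLike.ofReal_pow, RCLike.ofReal_re]
  ring

theorem norm_sub_inner_smul_le_sqrt {u v : E} {δ : ℝ} (hu : ‖u‖ = 1) (hv : ‖v‖ = 1)
    (h : 1 - δ ≤ ‖⟪u, v⟫_𝕜‖) :
    ‖v - ⟪u, v⟫_𝕜 • u‖ ≤ √(2 * δ) := by
  apply Real.le_sqrt_of_sq_le
  have hle := norm_inner_le_one_of_norm_eq_one (𝕜 := 𝕜) hu hv
  rw [norm_sub_inner_smul_sq hu, hv]
  nlinarith [norm_nonneg ⟪u, v⟫_𝕜]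

end

theorem overlap_pair_transfer_general {E : Type*} [NormedAddCommGroup E]
    [InnerProductSpace ℂ E]
    (u₁ u₂ v₁ v₂ : E) (ω δ : ℝ)
    (hu₁ : ‖u₁‖ = 1) (hu₂ : ‖u₂‖ = 1) (hv₁ : ‖v₁‖ = 1) (hv₂ : ‖v₂‖ = 1)
    (h12 : ‖⟪u₁, u₂⟫_ℂ‖ ≤ ω)
    (h1 : 1 - δ ≤ ‖⟪u₁, v₁⟫_ℂ‖)
    (h2 : 1 - δ ≤ ‖⟪u₂, v₂⟫_ℂ‖) :
    ‖⟪v₁, v₂⟫_ℂ‖ ≤ ω + Real.sqrt (10 * δ) := by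
  have hc₁ := norm_inner_le_one_of_norm_eq_one (𝕜 := ℂ) hu₁ hv₁
  have hc₂ := norm_inner_le_one_of_norm_eq_one (𝕜 := ℂ) hu₂ hv₂
  have hδ : 0 ≤ δ := by linarith
  have hsqrt : 2 * √(2 * δ) ≤ √(10 * δ) := by
    rw [show 2 * √(2 * δ) = √(2 ^ 2 * (2 * δ)) by simp]
    exact Real.sqrt_le_sqrt (by linarith)
  calc ‖⟪v₁, v₂⟫_ℂ‖
      ≤ ‖⟪⟪u₁, v₁⟫_ℂ • u₁, ⟪u₂, v₂⟫_ℂ • u₂⟫_ℂ‖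
          + ‖v₁ - ⟪u₁, v₁⟫_ℂ • u₁‖ + ‖v₂ - ⟪u₂, v₂⟫_ℂ • u₂‖ :=
        norm_inner_le_norm_inner_add_norm_sub_add_norm_sub
          (by rwa [norm_smul, hu₁, mul_one]) hv₂.le
    _ ≤ ω + √(2 * δ) + √(2 * δ) := by
        gcongr
        · exact (norm_inner_smul_smul_le hc₁ hc₂ u₁ u₂).trans h12
        · exact norm_sub_inner_smul_le_sqrt hu₁ hv₁ h1
        · exact norm_sub_inner_smul_le_sqrt hu₂ hv₂ h2
    _ ≤ ω + √(10 * δ) := by linarith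

/-- If `|⟨u₁|u₂⟩| ≤ ω` and `|⟨u_j|v_j⟩| ≥ 1 - δ` for unit vectors (`j = 1, 2`),
then `|⟨v₁|v₂⟩| ≤ ω + √(10δ)`. -/
theorem overlap_pair_transfer {E : Type*} [NormedAddCommGroup E]
    [InnerProductSpace ℂ E] [FiniteDimensional ℂ E]
    (u₁ u₂ v₁ v₂ : E) (ω δ : ℝ)
    (hu₁ : ‖u₁‖ = 1) (hu₂ : ‖u₂‖ = 1) (hv₁ : ‖v₁‖ = 1) (hv₂ : ‖v₂‖ = 1)
    (hω : 0 ≤ ω) (hδ0 : 0 ≤ δ) (hδ1 : δ ≤ 1)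
    (h12 : ‖⟪u₁, u₂⟫_ℂ‖ ≤ ω)
    (h1 : 1 - δ ≤ ‖⟪u₁, v₁⟫_ℂ‖)
    (h2 : 1 - δ ≤ ‖⟪u₂, v₂⟫_ℂ‖) :
    ‖⟪v₁, v₂⟫_ℂ‖ ≤ ω + Real.sqrt (10 * δ) :=
  overlap_pair_transfer_general u₁ u₂ v₁ v₂ ω δ hu₁ hu₂ hv₁ hv₂ h12 h1 h2
end

section
/- Let H be a Hermitian operator with least eigenvalue ε₀, spectral gap ε, and ground space of dimension g (ground space projector G of rank g; all other eigenvalues ≥ ε₀ + ε). If a density matrix σ satisfies Tr(σH) ≤ ε₀ + Δε/(2g+1) with Δ ≤ 1/(3g), then any eigenvector of σ corresponding to its largest eigenvalue is a unit vector |ψ⟩ with ⟨ψ|H|ψ⟩ ≤ ε₀ + Δε. -/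
open scoped InnerProductSpace

/-!
In the Loewner order, `X ↦ Tr(X N)` is monotone whenever `N ≥ 0`. The gap gives
`A ≥ ε₀ + ε (1 - G)`, so `Tr(Aσ) ≥ ε₀ + ε (1 - Tr(Gσ))`, and the energy bound forces the
ground-space weight `Tr(Gσ)` to be at least `1 - Δ/(2g+1)`. Since `σ ≤ μ` and `Tr G = g`, also
`Tr(Gσ) ≤ μ g`, which bounds the top eigenvalue `μ` from below. Finally `σ ≥ μ |ψ⟩⟨ψ|` and
`A ≥ ε₀` give `μ (⟨ψ|A|ψ⟩ - ε₀) ≤ Tr(Aσ) - ε₀ ≤ Δε/(2g+1)`; dividing by the lower bound on `μ`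
leaves `⟨ψ|A|ψ⟩ - ε₀ ≤ Δε`.
-/

section StarAlgebra

variable {S R : Type*} [CommSemiring S] [StarRing S] [Ring R] [StarRing R] [Algebra S R]
  [StarModule S R]

theorem sub_smul_eq_one_sub_mul_mul_one_sub {a p : R} {c : S} (ha : IsSelfAdjoint a)
    (hp : IsStarProjection p) (hc : IsSelfAdjoint c) (h : a * p = c • p) :
    a - c • p = (1 - p) * a * (1 - p) := by
  have h' : p * a = c • p := by
    simpa [ha.star_eq, hp.isSelfAdjoint.star_eq, hc.star_eq] using congrArg star h
  simp only [sub_mul, mul_sub, one_mul, mul_one, h, h', smul_mul_assoc, hp.isIdempotentElem.eq]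
  abel

end StarAlgebra

section Trace

open scoped ComplexOrder

open LinearMap ContinuousLinearMap InnerProductSpace

variable {𝕜 E : Type*} [RCLike 𝕜] [NormedAddCommGroup E] [InnerProductSpace 𝕜 E]
  [FiniteDimensional 𝕜 E]

theorem trace_comp_rankOne (T : E →L[𝕜] E) (x y : E) :
    trace 𝕜 E ((T : E →ₗ[𝕜] E) ∘ₗ (rankOne 𝕜 x y : E →ₗ[𝕜] E)) = ⟪y, T x⟫_𝕜 := by
  rw [← toLinearMap_comp, comp_rankOne, trace_rankOne]

theorem trace_comp_nonneg {M N : E →L[𝕜] E} (hM : 0 ≤ M) (hN : 0 ≤ N) :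
    0 ≤ trace 𝕜 E ((M : E →ₗ[𝕜] E) ∘ₗ (N : E →ₗ[𝕜] E)) := by
  obtain ⟨m, u, rfl⟩ :=
    isPositive_iff_eq_sum_rankOne.1 ((ContinuousLinearMap.nonneg_iff_isPositive N).1 hN)
  rw [toLinearMap_sum, ← Module.End.mul_eq_comp, Finset.mul_sum, map_sum]
  refine Finset.sum_nonneg fun i _ => ?_
  rw [Module.End.mul_eq_comp, trace_comp_rankOne]
  exact ((ContinuousLinearMap.nonneg_iff_isPositive M).1 hM).inner_nonneg_right (u i)

theorem trace_comp_mono_left {M M' N : E →L[𝕜] E} (hM : M ≤ M') (hN : 0 ≤ N) :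
    trace 𝕜 E ((M : E →ₗ[𝕜] E) ∘ₗ (N : E →ₗ[𝕜] E)) ≤
      trace 𝕜 E ((M' : E →ₗ[𝕜] E) ∘ₗ (N : E →ₗ[𝕜] E)) := by
  have := trace_comp_nonneg ((ContinuousLinearMap.nonneg_iff_isPositive _).2 hM) hN
  rwa [toLinearMap_sub, LinearMap.sub_comp, map_sub, sub_nonneg] at this

theorem trace_comp_mono_right {M N N' : E →L[𝕜] E} (hM : 0 ≤ M) (hN : N ≤ N') :
    trace 𝕜 E ((M : E →ₗ[𝕜] E) ∘ₗ (N : E →ₗ[𝕜] E)) ≤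
      trace 𝕜 E ((M : E →ₗ[𝕜] E) ∘ₗ (N' : E →ₗ[𝕜] E)) := by
  have := trace_comp_nonneg hM ((ContinuousLinearMap.nonneg_iff_isPositive _).2 hN)
  rwa [toLinearMap_sub, LinearMap.comp_sub, map_sub, sub_nonneg] at this

end Trace

section LoewnerOrder

open scoped ComplexOrder

open ContinuousLinearMap InnerProductSpace

variable {E : Type*} [NormedAddCommGroup E] [InnerProductSpace ℂ E] [FiniteDimensional ℂ E]

theorem nonneg_of_re_inner_map_self_nonneg {T : E →L[ℂ] E} (hT : IsSelfAdjoint T)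
    (h : ∀ w, 0 ≤ (⟪w, T w⟫_ℂ).re) : 0 ≤ T := by
  rw [nonneg_iff_isPositive, isPositive_def']
  exact ⟨hT, fun w => by rw [reApplyInnerSelf_apply, inner_re_symm]; exact h w⟩

theorem star_mul_mul_nonneg_of_re_inner_nonneg {P T : E →L[ℂ] E} (hT : IsSelfAdjoint T)
    (h : ∀ x, 0 ≤ (⟪P x, T (P x)⟫_ℂ).re) : 0 ≤ star P * T * P := by
  rw [nonneg_iff_isPositive, isPositive_def']
  refine ⟨hT.conjugate' P, fun x => ?_⟩
  rw [reApplyInnerSelf_apply, star_eq_adjoint, mul_apply_eq_comp, mul_apply_eq_comp,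
    adjoint_inner_left, ← inner_re_symm]
  exact h x

theorem le_smul_one_of_forall_eigenvalue_le {T : E →L[ℂ] E} (hT : IsSelfAdjoint T) {μ : ℝ}
    (h : ∀ (c : ℂ) (w : E), w ≠ 0 → T w = c • w → c.re ≤ μ) : T ≤ (μ : ℂ) • 1 := by
  have : T ≤ algebraMap ℝ (E →L[ℂ] E) μ := by
    refine le_algebraMap_of_spectrum_le (fun x hx => ?_) hT
    rw [← spectrum.algebraMap_mem_iff ℂ, spectrum_eq,
      ← Module.End.hasEigenvalue_iff_mem_spectrum] at hx
    obtain ⟨w, hw⟩ := hx.exists_hasEigenvector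
    simpa using h _ w hw.2 hw.apply_eq_smul
  simpa [Algebra.algebraMap_eq_smul_one] using this

theorem smul_rankOne_le_of_eigenvector {σ : E →L[ℂ] E} (hσ : 0 ≤ σ) {ψ : E} (hψ : ‖ψ‖ = 1)
    {μ : ℝ} (hψσ : σ ψ = (μ : ℂ) • ψ) : (μ : ℂ) • rankOne ℂ ψ ψ ≤ σ := by
  have hQ := isStarProjection_rankOne_self (𝕜 := ℂ) hψ
  have hσQ : σ * rankOne ℂ ψ ψ = (μ : ℂ) • rankOne ℂ ψ ψ := by
    ext x
    rw [mul_apply_eq_comp, rankOne_apply, map_smul, hψσ, smul_apply, rankOne_apply, smul_comm]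
  rw [← sub_nonneg, sub_smul_eq_one_sub_mul_mul_one_sub (IsSelfAdjoint.of_nonneg hσ) hQ
    (Complex.conj_ofReal μ) hσQ]
  exact hQ.one_sub.isSelfAdjoint.conjugate_nonneg hσ

theorem smul_one_add_smul_le_of_gap {A G : E →L[ℂ] E} {ε₀ ε : ℝ} (hA : IsSelfAdjoint A)
    (hG : IsStarProjection G) (hground : A * G = (ε₀ : ℂ) • G)
    (hgap : ∀ u : E, G u = 0 → (ε₀ + ε) * ‖u‖ ^ 2 ≤ (⟪u, A u⟫_ℂ).re) :
    (ε₀ : ℂ) • 1 + (ε : ℂ) • (1 - G) ≤ A := by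
  set c : ℂ := ((ε₀ + ε : ℝ) : ℂ)
  have key : A - ((ε₀ : ℂ) • 1 + (ε : ℂ) • (1 - G)) = star (1 - G) * (A - c • 1) * (1 - G) :=
    calc A - ((ε₀ : ℂ) • 1 + (ε : ℂ) • (1 - G)) = (A - (ε₀ : ℂ) • G) - c • (1 - G) := by
          simp only [c]; push_cast; module
      _ = (1 - G) * A * (1 - G) - c • ((1 - G) * (1 - G)) := by
          rw [sub_smul_eq_one_sub_mul_mul_one_sub hA hG (Complex.conj_ofReal ε₀) hground,
            hG.one_sub.isIdempotentElem.eq]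
      _ = star (1 - G) * (A - c • 1) * (1 - G) := by
          simp only [hG.one_sub.isSelfAdjoint.star_eq, mul_sub, sub_mul, mul_smul_comm,
            smul_mul_assoc, mul_one, one_mul]
          module
  rw [← sub_nonneg, key]
  refine star_mul_mul_nonneg_of_re_inner_nonneg
    (hA.sub (IsSelfAdjoint.smul (Complex.conj_ofReal _) (.one _))) fun x => ?_
  set y := (1 - G) x
  have hker : G y = 0 := by
    rw [← mul_apply_eq_comp, hG.mul_one_sub_self, zero_apply]
  have hy : (⟪y, y⟫_ℂ).re = ‖y‖ ^ 2 := inner_self_eq_norm_sq (𝕜 := ℂ) y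
  rw [sub_apply, smul_apply, one_apply_eq_self, inner_sub_right, inner_smul_right, Complex.sub_re,
    Complex.re_ofReal_mul, hy]
  linarith [hgap y hker]

theorem smul_one_le_of_gap {A G : E →L[ℂ] E} {ε₀ ε : ℝ} (hA : IsSelfAdjoint A)
    (hG : IsStarProjection G) (hground : A * G = (ε₀ : ℂ) • G)
    (hgap : ∀ u : E, G u = 0 → (ε₀ + ε) * ‖u‖ ^ 2 ≤ (⟪u, A u⟫_ℂ).re) (hε : 0 ≤ ε) :
    (ε₀ : ℂ) • 1 ≤ A :=
  (le_add_of_nonneg_right (smul_nonneg (Complex.zero_le_real.2 hε) hG.one_sub.nonneg)).trans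
    (smul_one_add_smul_le_of_gap hA hG hground hgap)

end LoewnerOrder

theorem excess_le_of_overlap_bounds {g Δ ε μ S e x : ℝ} (hg : 0 < g) (hε : 0 < ε)
    (hΔ0 : 0 ≤ Δ) (hΔ : Δ ≤ g + 1) (he : e ≤ Δ * ε / (2 * g + 1)) (hS : ε * (1 - S) ≤ e)
    (hSμ : S ≤ μ * g) (hx : μ * x ≤ e) : x ≤ Δ * ε := by
  set s := Δ / (2 * g + 1) with hs
  have hsΔ : s * (2 * g + 1) = Δ := div_mul_cancel₀ Δ (by positivity)
  have hs0 : 0 ≤ s := by positivity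
  have he' : e ≤ s * ε := by rwa [hs, div_mul_eq_mul_div]
  have hS' : 1 - s ≤ S := by nlinarith
  have hs1 : s < 1 := by nlinarith
  rcases le_or_gt x 0 with hx0 | hx0
  · exact hx0.trans (by positivity)
  · have key : (1 - s) * x ≤ (1 - s) * (Δ * ε) :=
      calc (1 - s) * x ≤ (μ * g) * x := mul_le_mul_of_nonneg_right (hS'.trans hSμ) hx0.le
        _ = g * (μ * x) := by ring
        _ ≤ g * (s * ε) := mul_le_mul_of_nonneg_left (hx.trans he') hg.le
        _ ≤ ((1 - s) * (2 * g + 1)) * (s * ε) := by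
          gcongr
          rw [sub_mul, one_mul, hsΔ]
          linarith
        _ = (1 - s) * (Δ * ε) := by rw [← hsΔ]; ring
    exact le_of_mul_le_mul_left key (by linarith)

/-- Demixing lemma: if a density matrix `σ` has energy at most `ε₀ + Δε/(2g+1)` with
`Δ ≤ 1/(3g)`, for a gapped Hamiltonian with `g`-dimensional ground space, then any
eigenvector of `σ` for its largest eigenvalue has energy at most `ε₀ + Δε`. -/
theorem demixing_lemma {E : Type*} [NormedAddCommGroup E]
    [InnerProductSpace ℂ E] [FiniteDimensional ℂ E]
    (A G σ : E →L[ℂ] E) (ε₀ ε Δ μ : ℝ) (g : ℕ) (ψ : E)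
    (hA : IsSelfAdjoint A)
    (hGsa : IsSelfAdjoint G) (hGidem : G ∘L G = G)
    (hground : A ∘L G = (ε₀ : ℂ) • G)
    (hgap : ∀ u : E, G u = 0 → (ε₀ + ε) * ‖u‖ ^ 2 ≤ (⟪u, A u⟫_ℂ).re)
    (hrank : Module.finrank ℂ (LinearMap.range (G : E →ₗ[ℂ] E)) = g)
    (hg : 1 ≤ g) (hε : 0 < ε)
    (hσsa : IsSelfAdjoint σ)
    (hσpos : ∀ w : E, 0 ≤ (⟪w, σ w⟫_ℂ).re)
    (hσtr : LinearMap.trace ℂ E (σ : E →ₗ[ℂ] E) = 1)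
    (hΔ0 : 0 ≤ Δ) (hΔ : Δ ≤ 1 / (3 * (g : ℝ)))
    (henergy : (LinearMap.trace ℂ E ((A : E →ₗ[ℂ] E) ∘ₗ (σ : E →ₗ[ℂ] E))).re ≤
      ε₀ + Δ * ε / (2 * (g : ℝ) + 1))
    (hψ : ‖ψ‖ = 1) (hψeig : σ ψ = (μ : ℂ) • ψ)
    (hμmax : ∀ (c : ℂ) (w : E), w ≠ 0 → σ w = c • w → c.re ≤ μ) :
    (⟪ψ, A ψ⟫_ℂ).re ≤ ε₀ + Δ * ε := by
  have hG : IsStarProjection G := ⟨hGidem, hGsa⟩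
  have hσ : 0 ≤ σ := nonneg_of_re_inner_map_self_nonneg hσsa hσpos
  have hlow := smul_one_add_smul_le_of_gap hA hG hground hgap
  have hweight_lb := Complex.re_le_re (trace_comp_mono_left hlow hσ)
  have hweight_ub := Complex.re_le_re (trace_comp_mono_right hG.nonneg
    (le_smul_one_of_forall_eigenvalue_le hσsa hμmax))
  have hψ_energy := Complex.re_le_re
    (trace_comp_mono_right (sub_nonneg.2 (smul_one_le_of_gap hA hG hground hgap hε.le))
      (smul_rankOne_le_of_eigenvector hσ hψ hψeig))
  simp only [ContinuousLinearMap.toLinearMap_add, ContinuousLinearMap.toLinearMap_sub,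
    ContinuousLinearMap.toLinearMap_smul, ContinuousLinearMap.toLinearMap_one,
    LinearMap.add_comp, LinearMap.sub_comp, LinearMap.smul_comp, LinearMap.comp_smul,
    Module.End.one_eq_id, LinearMap.id_comp, LinearMap.comp_id, map_add, map_sub, map_smul,
    trace_comp_rankOne, InnerProductSpace.trace_rankOne, inner_self_eq_one_of_norm_eq_one hψ,
    (LinearMap.IsIdempotentElem.isProj_range _
      (congrArg ContinuousLinearMap.toLinearMap hGidem)).trace,
    hrank, hσtr, smul_eq_mul, Complex.add_re, Complex.sub_re, Complex.re_ofReal_mul,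
    Complex.one_re, Complex.natCast_re, Complex.ofReal_re, mul_one] at hweight_lb hweight_ub hψ_energy
  have hg' : (1 : ℝ) ≤ g := by exact_mod_cast hg
  have hΔ' : Δ ≤ g + 1 :=
    hΔ.trans <| ((div_le_one (by positivity)).2 (by linarith)).trans (by linarith)
  linarith [excess_le_of_overlap_bounds (by positivity) hε hΔ0 hΔ'
    (e := (LinearMap.trace ℂ E ((A : E →ₗ[ℂ] E) ∘ₗ (σ : E →ₗ[ℂ] E))).re - ε₀)
    (x := (⟪ψ, A ψ⟫_ℂ).re - ε₀) (by linarith) (by linarith) hweight_ub (by linarith)]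
end

section
/- Consider a 1D chain Hamiltonian H = Σ_{j=1}^{n-1} H_j with 0 ≤ H_j ≤ 1, each H_j acting only on tensor factors j and j+1. Fix a cut i, set H_L = Σ_{j<i} H_j, H_M = H_i, H_R = Σ_{j>i} H_j. If |v₁⟩, |v₂⟩ are unit vectors each with energy ⟨v_k|H|v_k⟩ ≤ E₀ + ΔE where E₀ is the ground energy, then |⟨v₁|H_L|v₁⟩ - ⟨v₂|H_L|v₂⟩| ≤ 1 + ΔE. -/
open Matrix
open scoped Kronecker ComplexOrder

/-!
Slicing a state `v` along the cut writes its left energy `L(v) = ⟨v|H_L ⊗ 1|v⟩` as the sum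
of `⟨v_j|H_L|v_j⟩` over its columns `v_j = v(·, j)`, and its right energy `R(v)` likewise as a
sum over its rows. Testing `H ≥ E₀` on the product states `v₁(·, j) ⊗ v₂(i, ·)`, on which
`H_M` costs at most the squared norm, and summing over `i, j` gives `E₀ ≤ L(v₁) + 1 + R(v₂)`
for unit vectors. Since `H_M ≥ 0`, also `L(v₂) + R(v₂) ≤ ⟨v₂|H|v₂⟩ ≤ E₀ + ΔE`, hence
`L(v₂) - L(v₁) ≤ 1 + ΔE`; the other inequality follows by exchanging `v₁` and `v₂`.
-/

section Kronecker

variable {l m n p R : Type*} [Fintype m] [Fintype n]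

theorem dotProduct_eq_sum_rows [Mul R] [AddCommMonoid R] (u v : m × n → R) :
    u ⬝ᵥ v = ∑ i, (fun j => u (i, j)) ⬝ᵥ (fun j => v (i, j)) :=
  Fintype.sum_prod_type _

theorem dotProduct_eq_sum_cols [Mul R] [AddCommMonoid R] (u v : m × n → R) :
    u ⬝ᵥ v = ∑ j, (fun i => u (i, j)) ⬝ᵥ (fun i => v (i, j)) :=
  Fintype.sum_prod_type_right _

variable [CommSemiring R]

theorem kronecker_one_mulVec_apply [DecidableEq n] (A : Matrix l m R) (v : m × n → R)
    (i : l) (j : n) :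
    ((A ⊗ₖ (1 : Matrix n n R)) *ᵥ v) (i, j) = (A *ᵥ fun i' => v (i', j)) i := by
  simp [mulVec, dotProduct, Fintype.sum_prod_type, one_apply]

theorem one_kronecker_mulVec_apply [DecidableEq m] (B : Matrix p n R) (v : m × n → R)
    (i : m) (j : p) :
    (((1 : Matrix m m R) ⊗ₖ B) *ᵥ v) (i, j) = (B *ᵥ fun j' => v (i, j')) j := by
  simp [mulVec, dotProduct, Fintype.sum_prod_type, one_apply]

theorem kronecker_mulVec_prod (A : Matrix l m R) (B : Matrix p n R) (u : m → R) (w : n → R) :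
    (A ⊗ₖ B) *ᵥ (fun q => u q.1 * w q.2) = fun q => (A *ᵥ u) q.1 * (B *ᵥ w) q.2 := by
  ext q
  simp only [mulVec, dotProduct, kroneckerMap_apply, Fintype.sum_prod_type, Finset.sum_mul_sum]
  exact Finset.sum_congr rfl fun _ _ => Finset.sum_congr rfl fun _ _ => by ring

theorem dotProduct_kronecker_one_mulVec [Fintype l] [DecidableEq n] (A : Matrix l m R)
    (u : l × n → R) (v : m × n → R) :
    u ⬝ᵥ ((A ⊗ₖ (1 : Matrix n n R)) *ᵥ v)
      = ∑ j, (fun i => u (i, j)) ⬝ᵥ (A *ᵥ fun i => v (i, j)) := by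
  simp only [dotProduct_eq_sum_cols u, kronecker_one_mulVec_apply]

theorem dotProduct_one_kronecker_mulVec [Fintype p] [DecidableEq m] (B : Matrix p n R)
    (u : m × p → R) (v : m × n → R) :
    u ⬝ᵥ (((1 : Matrix m m R) ⊗ₖ B) *ᵥ v)
      = ∑ i, (fun j => u (i, j)) ⬝ᵥ (B *ᵥ fun j => v (i, j)) := by
  simp only [dotProduct_eq_sum_rows u, one_kronecker_mulVec_apply]

theorem star_prod_dotProduct_prod [StarRing R] (u u' : m → R) (w w' : n → R) :
    star (fun q : m × n => u q.1 * w q.2) ⬝ᵥ (fun q => u' q.1 * w' q.2)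
      = (star u ⬝ᵥ u') * (star w ⬝ᵥ w') := by
  simp only [dotProduct, Pi.star_apply, star_mul', Fintype.sum_prod_type, Finset.sum_mul_sum]
  exact Finset.sum_congr rfl fun _ _ => Finset.sum_congr rfl fun _ _ => by ring

end Kronecker

theorem star_dotProduct_self_eq_ofReal_re {n : Type*} [Fintype n] (w : n → ℂ) :
    star w ⬝ᵥ w = ((star w ⬝ᵥ w).re : ℂ) :=
  Complex.ext rfl (Complex.nonneg_iff.mp (dotProduct_star_self_nonneg w)).2.symm

theorem mul_re_le_re_dotProduct_mulVec_of_posSemidef_sub {n : Type*} [Fintype n] [DecidableEq n]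
    {H : Matrix n n ℂ} {E₀ : ℝ} (h : (H - (E₀ : ℂ) • 1).PosSemidef) (x : n → ℂ) :
    E₀ * (star x ⬝ᵥ x).re ≤ (star x ⬝ᵥ (H *ᵥ x)).re := by
  have := (Complex.nonneg_iff.mp (h.dotProduct_mulVec_nonneg x)).1
  simp only [sub_mulVec, smul_mulVec, one_mulVec, dotProduct_sub, dotProduct_smul,
    smul_eq_mul, Complex.sub_re, Complex.re_ofReal_mul] at this
  linarith

section Frustration

variable {m n : Type*} [Fintype m] [Fintype n] [DecidableEq m] [DecidableEq n]
  {A : Matrix m m ℂ} {B : Matrix n n ℂ} {M : Matrix (m × n) (m × n) ℂ} {E₀ : ℝ}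

theorem ground_energy_mul_le_of_prod
    (hM1 : ∀ x : m × n → ℂ, (star x ⬝ᵥ (M *ᵥ x)).re ≤ (star x ⬝ᵥ x).re)
    (hE₀ : ∀ x : m × n → ℂ, E₀ * (star x ⬝ᵥ x).re
      ≤ (star x ⬝ᵥ ((A ⊗ₖ (1 : Matrix n n ℂ) + M + (1 : Matrix m m ℂ) ⊗ₖ B) *ᵥ x)).re)
    (u : m → ℂ) (w : n → ℂ) :
    E₀ * ((star u ⬝ᵥ u).re * (star w ⬝ᵥ w).re)
      ≤ (star u ⬝ᵥ (A *ᵥ u)).re * (star w ⬝ᵥ w).re + (star u ⬝ᵥ u).re * (star w ⬝ᵥ w).re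
        + (star u ⬝ᵥ u).re * (star w ⬝ᵥ (B *ᵥ w)).re := by
  have hprod := hE₀ fun q => u q.1 * w q.2
  have hMprod := hM1 fun q => u q.1 * w q.2
  simp only [add_mulVec, dotProduct_add, Complex.add_re, kronecker_mulVec_prod,
    star_prod_dotProduct_prod, one_mulVec] at hprod hMprod
  rw [star_dotProduct_self_eq_ofReal_re u, star_dotProduct_self_eq_ofReal_re w] at hprod hMprod
  simp only [Complex.re_ofReal_mul, Complex.re_mul_ofReal, ← Complex.ofReal_mul,
    Complex.ofReal_re] at hprod hMprod
  linarith

theorem ground_energy_mul_le_left_add_right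
    (hM1 : ∀ x : m × n → ℂ, (star x ⬝ᵥ (M *ᵥ x)).re ≤ (star x ⬝ᵥ x).re)
    (hE₀ : ∀ x : m × n → ℂ, E₀ * (star x ⬝ᵥ x).re
      ≤ (star x ⬝ᵥ ((A ⊗ₖ (1 : Matrix n n ℂ) + M + (1 : Matrix m m ℂ) ⊗ₖ B) *ᵥ x)).re)
    (v₁ v₂ : m × n → ℂ) :
    E₀ * ((star v₁ ⬝ᵥ v₁).re * (star v₂ ⬝ᵥ v₂).re)
      ≤ (star v₁ ⬝ᵥ ((A ⊗ₖ (1 : Matrix n n ℂ)) *ᵥ v₁)).re * (star v₂ ⬝ᵥ v₂).re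
        + (star v₁ ⬝ᵥ v₁).re * (star v₂ ⬝ᵥ v₂).re
        + (star v₁ ⬝ᵥ v₁).re * (star v₂ ⬝ᵥ (((1 : Matrix m m ℂ) ⊗ₖ B) *ᵥ v₂)).re := by
  rw [dotProduct_kronecker_one_mulVec, dotProduct_one_kronecker_mulVec,
    dotProduct_eq_sum_cols (star v₁), dotProduct_eq_sum_rows (star v₂)]
  simp only [Complex.re_sum, Finset.mul_sum, Finset.sum_mul, ← Finset.sum_add_distrib]
  exact Finset.sum_le_sum fun i _ => Finset.sum_le_sum fun j _ =>
    ground_energy_mul_le_of_prod hM1 hE₀ _ _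

end Frustration

theorem left_energy_difference_bound_general (l r : ℕ)
    (A : Matrix (Fin l) (Fin l) ℂ) (B : Matrix (Fin r) (Fin r) ℂ)
    (M H : Matrix (Fin l × Fin r) (Fin l × Fin r) ℂ)
    (E₀ ΔE : ℝ) (v₁ v₂ : Fin l × Fin r → ℂ)
    (hM0 : ∀ x : Fin l × Fin r → ℂ, 0 ≤ (star x ⬝ᵥ (M *ᵥ x)).re)
    (hM1 : ∀ x : Fin l × Fin r → ℂ, (star x ⬝ᵥ (M *ᵥ x)).re ≤ (star x ⬝ᵥ x).re)
    (hH : H = A ⊗ₖ (1 : Matrix (Fin r) (Fin r) ℂ) + M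
            + (1 : Matrix (Fin l) (Fin l) ℂ) ⊗ₖ B)
    (hE₀ : (H - (E₀ : ℂ) • 1).PosSemidef)
    (hv₁unit : star v₁ ⬝ᵥ v₁ = 1) (hv₂unit : star v₂ ⬝ᵥ v₂ = 1)
    (hv₁ : (star v₁ ⬝ᵥ (H *ᵥ v₁)).re ≤ E₀ + ΔE)
    (hv₂ : (star v₂ ⬝ᵥ (H *ᵥ v₂)).re ≤ E₀ + ΔE) :
    |(star v₁ ⬝ᵥ ((A ⊗ₖ (1 : Matrix (Fin r) (Fin r) ℂ)) *ᵥ v₁)).re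
      - (star v₂ ⬝ᵥ ((A ⊗ₖ (1 : Matrix (Fin r) (Fin r) ℂ)) *ᵥ v₂)).re| ≤ 1 + ΔE := by
  subst hH
  have hE₀_bound := mul_re_le_re_dotProduct_mulVec_of_posSemidef_sub hE₀
  have h₁₂ := ground_energy_mul_le_left_add_right hM1 hE₀_bound v₁ v₂
  have h₂₁ := ground_energy_mul_le_left_add_right hM1 hE₀_bound v₂ v₁
  simp only [hv₁unit, hv₂unit, Complex.one_re, mul_one, one_mul] at h₁₂ h₂₁
  simp only [add_mulVec, dotProduct_add, Complex.add_re] at hv₁ hv₂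
  rw [abs_sub_le_iff]
  constructor <;> linarith [hM0 v₁, hM0 v₂]

/-- Frustration bound: for a bipartite-cut Hamiltonian `H = H_L ⊗ 1 + H_M + 1 ⊗ H_R`
with `H_L, H_R ⪰ 0` and `0 ≤ H_M ≤ 1`, the left energies of any two states within
`ΔE` of the ground energy `E₀` differ by at most `1 + ΔE`. -/
theorem left_energy_difference_bound (l r : ℕ)
    (A : Matrix (Fin l) (Fin l) ℂ) (B : Matrix (Fin r) (Fin r) ℂ)
    (M H : Matrix (Fin l × Fin r) (Fin l × Fin r) ℂ)
    (E₀ ΔE : ℝ) (v₁ v₂ : Fin l × Fin r → ℂ)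
    (hA : A.PosSemidef) (hB : B.PosSemidef)
    (hM : M.IsHermitian)
    (hM0 : ∀ x : Fin l × Fin r → ℂ, 0 ≤ (star x ⬝ᵥ (M *ᵥ x)).re)
    (hM1 : ∀ x : Fin l × Fin r → ℂ, (star x ⬝ᵥ (M *ᵥ x)).re ≤ (star x ⬝ᵥ x).re)
    (hH : H = A ⊗ₖ (1 : Matrix (Fin r) (Fin r) ℂ) + M
            + (1 : Matrix (Fin l) (Fin l) ℂ) ⊗ₖ B)
    (hE₀ : (H - (E₀ : ℂ) • 1).PosSemidef)
    (hE₀eig : ∃ x : Fin l × Fin r → ℂ, x ≠ 0 ∧ H *ᵥ x = (E₀ : ℂ) • x)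
    (hΔE : 0 ≤ ΔE)
    (hv₁unit : star v₁ ⬝ᵥ v₁ = 1) (hv₂unit : star v₂ ⬝ᵥ v₂ = 1)
    (hv₁ : (star v₁ ⬝ᵥ (H *ᵥ v₁)).re ≤ E₀ + ΔE)
    (hv₂ : (star v₂ ⬝ᵥ (H *ᵥ v₂)).re ≤ E₀ + ΔE) :
    |(star v₁ ⬝ᵥ ((A ⊗ₖ (1 : Matrix (Fin r) (Fin r) ℂ)) *ᵥ v₁)).re
      - (star v₂ ⬝ᵥ ((A ⊗ₖ (1 : Matrix (Fin r) (Fin r) ℂ)) *ᵥ v₂)).re| ≤ 1 + ΔE :=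
  left_energy_difference_bound_general l r A B M H E₀ ΔE v₁ v₂ hM0 hM1 hH hE₀ hv₁unit hv₂unit hv₁
    hv₂
end

section
/- Let G be a rank-g orthogonal projector on a finite-dimensional complex Hilbert space, and let |v₁⟩,…,|v_g⟩ be orthonormal vectors with ⟨v_i|G|v_i⟩ ≥ 1 - δ/g for each i, where 0 ≤ δ < 1. Then every unit vector |v⟩ in span{|v₁⟩,…,|v_g⟩} satisfies ⟨v|G|v⟩ ≥ 1 - δ. -/
open scoped InnerProductSpace

/-!
With `Q = 1 - G` the complementary projector, `Re ⟨x|G|x⟩ = ‖x‖² - ‖Q x‖²`, so the hypothesis says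
`‖Q vᵢ‖² ≤ δ / g`. For a unit vector `w = ∑ cᵢ vᵢ`, Cauchy–Schwarz on the coefficients gives
`‖Q w‖² ≤ (∑ |cᵢ|²) (∑ ‖Q vᵢ‖²) ≤ g · δ / g = δ`.
-/

theorem IsStarProjection.re_inner_map_self
    {𝕜 E : Type*} [RCLike 𝕜] [NormedAddCommGroup E] [InnerProductSpace 𝕜 E] [CompleteSpace E]
    {p : E →L[𝕜] E} (hp : IsStarProjection p) (x : E) :
    RCLike.re ⟪x, p x⟫_𝕜 = ‖p x‖ ^ 2 := by
  have hpp : p (p x) = p x := congr($hp.isIdempotentElem.eq x)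
  have hsym : ⟪p x, p x⟫_𝕜 = ⟪x, p (p x)⟫_𝕜 := hp.isSelfAdjoint.isSymmetric x (p x)
  rw [@norm_sq_eq_re_inner 𝕜, hsym, hpp]

theorem IsStarProjection.norm_sub_map_sq
    {𝕜 E : Type*} [RCLike 𝕜] [NormedAddCommGroup E] [InnerProductSpace 𝕜 E] [CompleteSpace E]
    {p : E →L[𝕜] E} (hp : IsStarProjection p) (x : E) :
    ‖x - p x‖ ^ 2 = ‖x‖ ^ 2 - RCLike.re ⟪x, p x⟫_𝕜 := by
  have h := hp.one_sub.re_inner_map_self x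
  simp only [sub_apply, one_apply_eq_self, inner_sub_right, map_sub] at h
  rw [← h, @norm_sq_eq_re_inner 𝕜 _ _ _ _ x]

theorem Orthonormal.norm_apply_sq_le_mul_sum {𝕜 E F ι : Type*} [RCLike 𝕜]
    [SeminormedAddCommGroup E] [InnerProductSpace 𝕜 E] [SeminormedAddCommGroup F] [NormedSpace 𝕜 F]
    [Fintype ι] {v : ι → E} (hv : Orthonormal 𝕜 v) (T : E →ₗ[𝕜] F) {w : E}
    (hw : w ∈ Submodule.span 𝕜 (Set.range v)) :
    ‖T w‖ ^ 2 ≤ ‖w‖ ^ 2 * ∑ i, ‖T (v i)‖ ^ 2 := by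
  obtain ⟨c, rfl⟩ := (Submodule.mem_span_range_iff_exists_fun 𝕜).mp hw
  have hc : ∑ i, ‖c i‖ ^ 2 ≤ ‖∑ i, c i • v i‖ ^ 2 := by
    simpa [hv.inner_right_fintype] using hv.sum_inner_products_le (∑ i, c i • v i) (s := Finset.univ)
  calc ‖T (∑ i, c i • v i)‖ ^ 2 ≤ (∑ i, ‖c i‖ * ‖T (v i)‖) ^ 2 := by
        gcongr
        simpa [norm_smul] using norm_sum_le Finset.univ fun i ↦ c i • T (v i)
    _ ≤ (∑ i, ‖c i‖ ^ 2) * ∑ i, ‖T (v i)‖ ^ 2 := Finset.sum_mul_sq_le_sq_mul_sq _ _ _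
    _ ≤ ‖∑ i, c i • v i‖ ^ 2 * ∑ i, ‖T (v i)‖ ^ 2 := by gcongr

theorem span_overlap_general {E : Type*} [NormedAddCommGroup E]
    [InnerProductSpace ℂ E] [FiniteDimensional ℂ E]
    (G : E →L[ℂ] E) (g : ℕ) (δ : ℝ) (v : Fin g → E)
    (hGsa : IsSelfAdjoint G) (hGidem : G ∘L G = G)
    (hv : Orthonormal ℂ v)
    (hδ0 : 0 ≤ δ)
    (hover : ∀ i, 1 - δ / g ≤ (⟪v i, G (v i)⟫_ℂ).re)
    (w : E) (hw : ‖w‖ = 1) (hwspan : w ∈ Submodule.span ℂ (Set.range v)) :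
    1 - δ ≤ (⟪w, G w⟫_ℂ).re := by
  have hG : IsStarProjection G := ⟨hGidem, hGsa⟩
  have hdefect (x : E) : ‖x - G x‖ ^ 2 = ‖x‖ ^ 2 - (⟪x, G x⟫_ℂ).re := hG.norm_sub_map_sq x
  have hvi (i : Fin g) : ‖v i - G (v i)‖ ^ 2 ≤ δ / g := by
    rw [hdefect, hv.norm_eq_one]
    linarith [hover i]
  have hwG : ‖w - G w‖ ^ 2 ≤ δ :=
    calc ‖w - G w‖ ^ 2 ≤ ‖w‖ ^ 2 * ∑ i, ‖v i - G (v i)‖ ^ 2 :=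
        hv.norm_apply_sq_le_mul_sum (LinearMap.id - G.toLinearMap) hwspan
      _ ≤ g * (δ / g) := by
        simpa [hw] using Finset.sum_le_sum (s := Finset.univ) fun i _ ↦ hvi i
      _ ≤ δ := by
        rcases eq_or_ne g 0 with rfl | hg
        · simpa using hδ0
        · rw [mul_div_cancel₀ _ (Nat.cast_ne_zero.mpr hg)]
  rw [hdefect, hw] at hwG
  linarith

/-- If `G` is a rank-`g` orthogonal projector and `v₁, …, v_g` are orthonormal with
`⟨v_i|G|v_i⟩ ≥ 1 - δ/g`, then every unit vector in their span has `⟨v|G|v⟩ ≥ 1 - δ`. -/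
theorem span_overlap {E : Type*} [NormedAddCommGroup E]
    [InnerProductSpace ℂ E] [FiniteDimensional ℂ E]
    (G : E →L[ℂ] E) (g : ℕ) (δ : ℝ) (v : Fin g → E)
    (hGsa : IsSelfAdjoint G) (hGidem : G ∘L G = G)
    (hrank : Module.finrank ℂ (LinearMap.range (G : E →ₗ[ℂ] E)) = g)
    (hv : Orthonormal ℂ v)
    (hδ0 : 0 ≤ δ) (hδ1 : δ < 1)
    (hover : ∀ i, 1 - δ / g ≤ (⟪v i, G (v i)⟫_ℂ).re)
    (w : E) (hw : ‖w‖ = 1) (hwspan : w ∈ Submodule.span ℂ (Set.range v)) :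
    1 - δ ≤ (⟪w, G w⟫_ℂ).re :=
  span_overlap_general G g δ v hGsa hGidem hv hδ0 hover w hw hwspan
end

section
/- Let G be a rank-g orthogonal projector and |v₁⟩,…,|v_g⟩ orthonormal vectors with ⟨v_i|G|v_i⟩ ≥ 1 - δ/g for each i, with 0 ≤ δ < 1. Then the vectors G|v₁⟩,…,G|v_g⟩ are linearly independent, hence form a basis of the range of G. -/
/-!
Write `w = ∑ cᵢ vᵢ`. If `∑ cᵢ G vᵢ = 0` then `G w = 0`, so `w = (1 - G) w = ∑ cᵢ (1 - G) vᵢ`, and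
Cauchy–Schwarz gives `‖w‖² ≤ ‖w‖² ∑ ‖(1 - G) vᵢ‖²`. Since `G` is an orthogonal projector,
`‖(1 - G) vᵢ‖² = 1 - ⟨vᵢ|G|vᵢ⟩ ≤ δ/g`, so the last sum is at most `δ < 1`, forcing `w = 0` and
hence `c = 0`. Linear independence of `g = rank G` vectors in `im G` then makes them a basis.
-/

open scoped InnerProductSpace

open RCLike

section

variable {𝕜 E : Type*} [RCLike 𝕜] [NormedAddCommGroup E] [InnerProductSpace 𝕜 E]
  {ι : Type*} [Fintype ι] {v : ι → E}

theorem Orthonormal.norm_sum_smul_sq (hv : Orthonormal 𝕜 v) (c : ι → 𝕜) :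
    ‖∑ i, c i • v i‖ ^ 2 = ∑ i, ‖c i‖ ^ 2 := by
  rw [← inner_self_eq_norm_sq (𝕜 := 𝕜), hv.inner_sum c c, map_sum]
  simp only [RCLike.conj_mul, ← ofReal_pow, ofReal_re]

theorem Orthonormal.norm_map_sum_smul_sq_le {F : Type*} [SeminormedAddCommGroup F]
    [NormedSpace 𝕜 F] (hv : Orthonormal 𝕜 v) (T : E →ₗ[𝕜] F) (c : ι → 𝕜) :
    ‖T (∑ i, c i • v i)‖ ^ 2 ≤ ‖∑ i, c i • v i‖ ^ 2 * ∑ i, ‖T (v i)‖ ^ 2 := by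
  have hsum : ‖T (∑ i, c i • v i)‖ ≤ ∑ i, ‖c i‖ * ‖T (v i)‖ := by
    simpa only [map_sum, map_smul, norm_smul] using norm_sum_le _ fun i => c i • T (v i)
  calc ‖T (∑ i, c i • v i)‖ ^ 2 ≤ (∑ i, ‖c i‖ * ‖T (v i)‖) ^ 2 := by gcongr
    _ ≤ (∑ i, ‖c i‖ ^ 2) * ∑ i, ‖T (v i)‖ ^ 2 := Finset.sum_mul_sq_le_sq_mul_sq _ _ _
    _ = ‖∑ i, c i • v i‖ ^ 2 * ∑ i, ‖T (v i)‖ ^ 2 := by rw [hv.norm_sum_smul_sq]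

theorem Orthonormal.linearIndependent_map_of_sum_norm_sub_sq_lt_one (hv : Orthonormal 𝕜 v)
    (T : E →ₗ[𝕜] E) (hT : ∑ i, ‖v i - T (v i)‖ ^ 2 < 1) : LinearIndependent 𝕜 fun i => T (v i) := by
  rw [Fintype.linearIndependent_iff]
  intro c hc
  set w := ∑ i, c i • v i
  set S : E →ₗ[𝕜] E := LinearMap.id - T
  have hSw : S w = w := by
    simpa only [S, w, LinearMap.sub_apply, LinearMap.id_apply, map_sum, map_smul, smul_sub,
      Finset.sum_sub_distrib, sub_eq_self] using hc
  have hw : ‖w‖ ^ 2 * (1 - ∑ i, ‖v i - T (v i)‖ ^ 2) ≤ 0 := by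
    have := calc ‖w‖ ^ 2 = ‖S w‖ ^ 2 := by rw [hSw]
      _ ≤ ‖w‖ ^ 2 * ∑ i, ‖S (v i)‖ ^ 2 := hv.norm_map_sum_smul_sq_le S c
    simp only [S, LinearMap.sub_apply, LinearMap.id_apply] at this
    linarith
  have hw0 : w = 0 :=
    norm_eq_zero.mp <| pow_eq_zero_iff two_ne_zero |>.mp <|
      (nonpos_of_mul_nonpos_left hw (sub_pos.mpr hT)).antisymm (sq_nonneg _)
  exact Fintype.linearIndependent_iff.mp hv.linearIndependent c hw0

end

theorem LinearMap.IsSymmetricProjection.norm_sub_apply_sq {𝕜 E : Type*} [RCLike 𝕜]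
    [NormedAddCommGroup E] [InnerProductSpace 𝕜 E] {G : E →ₗ[𝕜] E}
    (hG : G.IsSymmetricProjection) (x : E) :
    ‖x - G x‖ ^ 2 = ‖x‖ ^ 2 - re ⟪x, G x⟫_𝕜 := by
  have hGG : ⟪G x, G x⟫_𝕜 = ⟪x, G x⟫_𝕜 := by
    rw [hG.isSymmetric, ← Module.End.mul_apply, hG.isIdempotentElem.eq]
  rw [@norm_sub_sq 𝕜, ← inner_self_eq_norm_sq (𝕜 := 𝕜) (G x), hGG]
  ring

theorem basis_under_projection_general {E : Type*} [NormedAddCommGroup E]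
    [InnerProductSpace ℂ E] [FiniteDimensional ℂ E]
    (G : E →L[ℂ] E) (g : ℕ) (δ : ℝ) (v : Fin g → E)
    (hGsa : IsSelfAdjoint G) (hGidem : G ∘L G = G)
    (hrank : Module.finrank ℂ (LinearMap.range (G : E →ₗ[ℂ] E)) = g)
    (hv : Orthonormal ℂ v)
    (hδ1 : δ < 1)
    (hover : ∀ i, 1 - δ / g ≤ (⟪v i, G (v i)⟫_ℂ).re) :
    LinearIndependent ℂ (fun i => G (v i)) ∧
      Submodule.span ℂ (Set.range fun i => G (v i)) =
        LinearMap.range (G : E →ₗ[ℂ] E) := by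
  have hG : (G : E →ₗ[ℂ] E).IsSymmetricProjection :=
    ContinuousLinearMap.isStarProjection_iff_isSymmetricProjection.mp ⟨hGidem, hGsa⟩
  have hdefect : ∑ i, ‖v i - G (v i)‖ ^ 2 < 1 := by
    calc ∑ i, ‖v i - G (v i)‖ ^ 2 ≤ ∑ _i : Fin g, δ / g := by
          refine Finset.sum_le_sum fun i _ => ?_
          rw [← ContinuousLinearMap.coe_coe, hG.norm_sub_apply_sq, hv.1 i]
          simp only [ContinuousLinearMap.coe_coe, RCLike.re_to_complex, one_pow]
          linarith [hover i]
      _ < 1 := by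
          rcases eq_or_ne g 0 with rfl | hg
          · simp
          · simpa [mul_div_cancel₀ δ (Nat.cast_ne_zero.mpr hg)] using hδ1
  have hli : LinearIndependent ℂ fun i => G (v i) :=
    hv.linearIndependent_map_of_sum_norm_sub_sq_lt_one (G : E →ₗ[ℂ] E) hdefect
  refine ⟨hli, Submodule.eq_of_le_of_finrank_eq ?_ ?_⟩
  · exact Submodule.span_le.mpr <| Set.range_subset_iff.mpr fun i => ⟨v i, rfl⟩
  · rw [hrank, finrank_span_eq_card hli, Fintype.card_fin]

/-- Basis under projection: if `G` is a rank-`g` orthogonal projector and `v₁, …, v_g`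
are orthonormal with `⟨v_i|G|v_i⟩ ≥ 1 - δ/g` (`δ < 1`), then `G v₁, …, G v_g` are
linearly independent and span the range of `G`, i.e. they form a basis of `im G`. -/
theorem basis_under_projection {E : Type*} [NormedAddCommGroup E]
    [InnerProductSpace ℂ E] [FiniteDimensional ℂ E]
    (G : E →L[ℂ] E) (g : ℕ) (δ : ℝ) (v : Fin g → E)
    (hGsa : IsSelfAdjoint G) (hGidem : G ∘L G = G)
    (hrank : Module.finrank ℂ (LinearMap.range (G : E →ₗ[ℂ] E)) = g)
    (hv : Orthonormal ℂ v)
    (hδ0 : 0 ≤ δ) (hδ1 : δ < 1)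
    (hover : ∀ i, 1 - δ / g ≤ (⟪v i, G (v i)⟫_ℂ).re) :
    LinearIndependent ℂ (fun i => G (v i)) ∧
      Submodule.span ℂ (Set.range fun i => G (v i)) =
        LinearMap.range (G : E →ₗ[ℂ] E) :=
  basis_under_projection_general G g δ v hGsa hGidem hrank hv hδ1 hover
end

section
/- Let G be a rank-g orthogonal projector and |v₁⟩,…,|v_g⟩ orthonormal vectors with ⟨v_i|G|v_i⟩ ≥ 1 - δ/g for each i, with 0 ≤ δ < 1, and let S = span{|v₁⟩,…,|v_g⟩}. Then any unit vector |v'⟩ orthogonal to S satisfies ⟨v'|G|v'⟩ ≤ δ. -/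
/-!
A self-adjoint idempotent `G` is the orthogonal projection onto its range `K`, so
`re ⟪x, G x⟫ = ‖P_K x‖²`. For any orthonormal family these quantities sum to at most `dim K`:
expand each `‖P_K x‖²` by Parseval in an orthonormal basis of `K`, swap the sums, and apply
Bessel's inequality to every basis vector. Applied to the orthonormal family `w, v₁, …, v_g`
this gives `⟪w, G w⟫ ≤ g - ∑ ⟪v i, G (v i)⟫ ≤ g - g (1 - δ / g) ≤ δ`.
-/

open scoped InnerProductSpace

open RCLike Module in
theorem Orthonormal.sum_re_inner_starProjection_le_finrank {𝕜 E ι : Type*} [RCLike 𝕜]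
    [NormedAddCommGroup E] [InnerProductSpace 𝕜 E] {u : ι → E} (hu : Orthonormal 𝕜 u)
    (s : Finset ι) (K : Submodule 𝕜 E) [FiniteDimensional 𝕜 K] :
    ∑ i ∈ s, re ⟪u i, K.starProjection (u i)⟫_𝕜 ≤ finrank 𝕜 K := by
  set b := stdOrthonormalBasis 𝕜 K
  have parseval (x : E) :
      re ⟪x, K.starProjection x⟫_𝕜 = ∑ k, ‖⟪x, (b k : E)⟫_𝕜‖ ^ 2 := by
    rw [← K.inner_starProjection_left_eq_right, K.re_inner_starProjection_eq_normSq,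
      ← b.sum_sq_norm_inner_left]
    simp
  calc ∑ i ∈ s, re ⟪u i, K.starProjection (u i)⟫_𝕜
      = ∑ k, ∑ i ∈ s, ‖⟪u i, (b k : E)⟫_𝕜‖ ^ 2 := by
        simp_rw [parseval]
        exact Finset.sum_comm
    _ ≤ ∑ k, ‖(b k : E)‖ ^ 2 := Finset.sum_le_sum fun k _ ↦ hu.sum_inner_products_le _
    _ = finrank 𝕜 K := by simp [Submodule.norm_coe, b.orthonormal.1]

theorem Orthonormal.fin_cons {𝕜 E : Type*} [RCLike 𝕜]
    [NormedAddCommGroup E] [InnerProductSpace 𝕜 E] {n : ℕ} {v : Fin n → E}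
    (hv : Orthonormal 𝕜 v) {w : E} (hw : ‖w‖ = 1) (hwv : ∀ i, ⟪v i, w⟫_𝕜 = 0) :
    Orthonormal 𝕜 (Fin.cons w v : Fin (n + 1) → E) := by
  rw [orthonormal_iff_ite] at hv ⊢
  intro i j
  cases i using Fin.cases <;> cases j using Fin.cases <;>
    simp [hv, hwv, inner_self_eq_norm_sq_to_K, hw, ← inner_conj_symm w, Fin.succ_inj,
      eq_comm (a := (0 : Fin _))]

theorem fullness_lemma_general {E : Type*} [NormedAddCommGroup E]
    [InnerProductSpace ℂ E] [FiniteDimensional ℂ E]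
    (G : E →L[ℂ] E) (g : ℕ) (δ : ℝ) (v : Fin g → E)
    (hGsa : IsSelfAdjoint G) (hGidem : G ∘L G = G)
    (hrank : Module.finrank ℂ (LinearMap.range (G : E →ₗ[ℂ] E)) = g)
    (hv : Orthonormal ℂ v)
    (hδ0 : 0 ≤ δ)
    (hover : ∀ i, 1 - δ / g ≤ (⟪v i, G (v i)⟫_ℂ).re)
    (w : E) (hw : ‖w‖ = 1) (hwperp : ∀ i, ⟪v i, w⟫_ℂ = 0) :
    (⟪w, G w⟫_ℂ).re ≤ δ := by
  obtain ⟨_, hG⟩ := isStarProjection_iff_eq_starProjection_range.mp ⟨hGidem, hGsa⟩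
  have hbound := (hv.fin_cons hw hwperp).sum_re_inner_starProjection_le_finrank .univ G.range
  rw [← hG, Fin.sum_univ_succ] at hbound
  simp only [Fin.cons_zero, Fin.cons_succ, RCLike.re_to_complex] at hbound
  have hlower : (g : ℝ) - δ ≤ ∑ i, (⟪v i, G (v i)⟫_ℂ).re :=
    calc (g : ℝ) - δ ≤ ∑ _i : Fin g, (1 - δ / g) := by
          rcases eq_or_ne g 0 with rfl | hg
          · simpa using hδ0
          · simp [mul_div_cancel₀ δ (Nat.cast_ne_zero.mpr hg)]
      _ ≤ ∑ i, (⟪v i, G (v i)⟫_ℂ).re := Finset.sum_le_sum fun i _ ↦ hover i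
  have hrank' : (Module.finrank ℂ G.range : ℝ) = g := congrArg Nat.cast hrank
  linarith

/-- Fullness: if `G` is a rank-`g` orthogonal projector and `v₁, …, v_g` orthonormal
with `⟨v_i|G|v_i⟩ ≥ 1 - δ/g` (`δ < 1`), then any unit vector orthogonal to all `v_i`
satisfies `⟨v'|G|v'⟩ ≤ δ`. -/
theorem fullness_lemma {E : Type*} [NormedAddCommGroup E]
    [InnerProductSpace ℂ E] [FiniteDimensional ℂ E]
    (G : E →L[ℂ] E) (g : ℕ) (δ : ℝ) (v : Fin g → E)
    (hGsa : IsSelfAdjoint G) (hGidem : G ∘L G = G)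
    (hrank : Module.finrank ℂ (LinearMap.range (G : E →ₗ[ℂ] E)) = g)
    (hv : Orthonormal ℂ v)
    (hδ0 : 0 ≤ δ) (hδ1 : δ < 1)
    (hover : ∀ i, 1 - δ / g ≤ (⟪v i, G (v i)⟫_ℂ).re)
    (w : E) (hw : ‖w‖ = 1) (hwperp : ∀ i, ⟪v i, w⟫_ℂ = 0) :
    (⟪w, G w⟫_ℂ).re ≤ δ :=
  fullness_lemma_general G g δ v hGsa hGidem hrank hv hδ0 hover w hw hwperp
end

section
/- Let G and Υ be rank-g orthogonal projectors on a finite-dimensional complex Hilbert space, where Υ = Σ_{j=1}^g |γ_j⟩⟨γ_j| for orthonormal |γ_j⟩ satisfying ⟨γ_j|G|γ_j⟩ ≥ 1 - η²/(2g) for each j. Then ‖G - Υ‖_F ≤ η (Frobenius/Hilbert–Schmidt norm). -/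
open scoped InnerProductSpace
open InnerProductSpace

/-!
`G - Υ` is self-adjoint and `G`, `Υ` are idempotent, so
`‖G - Υ‖_F² = tr G + tr Υ - 2 Re tr (G Υ) = 2g - 2 Re ∑ j, ⟪γ j, G γ j⟫`,
and the hypothesis bounds each of the `g` summands `⟪γ j, G γ j⟫` from below.
-/

theorem LinearMap.trace_sub_mul_sub_of_isIdempotentElem {R M : Type*} [CommRing R]
    [AddCommGroup M] [Module R M] [Module.Free R M] [Module.Finite R M] {f g : Module.End R M}
    (hf : IsIdempotentElem f) (hg : IsIdempotentElem g) :
    trace R M ((f - g) * (f - g)) = trace R M f + trace R M g - 2 * trace R M (f * g) := by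
  have hsq : (f - g) * (f - g) = f + g - f * g - g * f := by
    rw [sub_mul, mul_sub, mul_sub, hf.eq, hg.eq]; abel
  rw [hsq, map_sub, map_sub, map_add, trace_mul_comm R g f]
  ring

section

variable {𝕜 E : Type*} [RCLike 𝕜] [NormedAddCommGroup E] [InnerProductSpace 𝕜 E]

theorem Orthonormal.isStarProjection_sum_rankOne_self [CompleteSpace E] {ι : Type*} [Fintype ι]
    {v : ι → E} (hv : Orthonormal 𝕜 v) : IsStarProjection (∑ i, rankOne 𝕜 (v i) (v i)) := by
  classical
  refine ⟨?_, isSelfAdjoint_sum _ fun i _ ↦ (isStarProjection_rankOne_self (hv.1 i)).isSelfAdjoint⟩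
  simp [IsIdempotentElem, Finset.sum_mul, Finset.mul_sum, ContinuousLinearMap.mul_def,
    rankOne_comp_rankOne, orthonormal_iff_ite.mp hv]

variable [FiniteDimensional 𝕜 E]

theorem ContinuousLinearMap.trace_comp_sum_rankOne {ι : Type*} [Fintype ι] (T : E →L[𝕜] E)
    (u v : ι → E) :
    LinearMap.trace 𝕜 E (T ∘L ∑ i, rankOne 𝕜 (u i) (v i) : E →L[𝕜] E) = ∑ i, ⟪v i, T (u i)⟫_𝕜 := by
  simp [comp_finsetSum, comp_rankOne, trace_rankOne]

end

theorem two_mul_sub_two_mul_sum_le {g : ℕ} {a : ℝ} (ha : 0 ≤ a) {x : Fin g → ℝ}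
    (hx : ∀ j, 1 - a / (2 * g) ≤ x j) : 2 * g - 2 * ∑ j, x j ≤ a := by
  have hsum : ∑ j, (1 - a / (2 * g)) ≤ ∑ j, x j := Finset.sum_le_sum fun j _ ↦ hx j
  have hcancel : (g : ℝ) * (a / (2 * g)) ≤ a / 2 :=
    calc (g : ℝ) * (a / (2 * g)) = a / 2 * (g / g) := by ring
      _ ≤ a / 2 := mul_le_of_le_one_right (by positivity) (div_self_le_one _)
  simp only [Finset.sum_sub_distrib, Finset.sum_const, Finset.card_univ, Fintype.card_fin,
    nsmul_eq_mul, mul_one] at hsum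
  linarith

theorem projector_frobenius_close_general {E : Type*} [NormedAddCommGroup E]
    [InnerProductSpace ℂ E] [FiniteDimensional ℂ E]
    (G Υ : E →L[ℂ] E) (g : ℕ) (η : ℝ) (γ : Fin g → E)
    (hGsa : IsSelfAdjoint G) (hGidem : G ∘L G = G)
    (hGrank : Module.finrank ℂ (LinearMap.range (G : E →ₗ[ℂ] E)) = g)
    (hγ : Orthonormal ℂ γ)
    (hΥ : ∀ x : E, Υ x = ∑ j, ⟪γ j, x⟫_ℂ • γ j)
    (hη : 0 ≤ η)
    (hover : ∀ j, 1 - η ^ 2 / (2 * g) ≤ (⟪γ j, G (γ j)⟫_ℂ).re) :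
    Real.sqrt ((LinearMap.trace ℂ E
      ((((G - Υ).adjoint ∘L (G - Υ)) : E →L[ℂ] E) : E →ₗ[ℂ] E)).re) ≤ η := by
  have hΥsum : Υ = ∑ j, rankOne ℂ (γ j) (γ j) := by ext x; simp [hΥ]
  have hΥproj : IsStarProjection Υ := hΥsum ▸ hγ.isStarProjection_sum_rankOne_self
  have hGidem' : IsIdempotentElem (G : E →ₗ[ℂ] E) :=
    ContinuousLinearMap.IsIdempotentElem.toLinearMap hGidem
  have hadj : (G - Υ).adjoint = G - Υ := (hGsa.sub hΥproj.isSelfAdjoint).star_eq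
  have htrG : LinearMap.trace ℂ E G = g := by
    rw [(LinearMap.IsIdempotentElem.isProj_range _ hGidem').trace, hGrank]
  have htrΥ : LinearMap.trace ℂ E Υ = g := by
    simpa [hΥsum, hγ.1] using ContinuousLinearMap.trace_comp_sum_rankOne (.id ℂ E) γ γ
  have htrGΥ : LinearMap.trace ℂ E (G ∘L Υ : E →L[ℂ] E) = ∑ j, ⟪γ j, G (γ j)⟫_ℂ := by
    rw [hΥsum, ContinuousLinearMap.trace_comp_sum_rankOne]
  have htrace : LinearMap.trace ℂ E ((G - Υ).adjoint ∘L (G - Υ) : E →L[ℂ] E)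
      = 2 * g - 2 * ∑ j, ⟪γ j, G (γ j)⟫_ℂ := by
    rw [hadj, ← ContinuousLinearMap.mul_def, ContinuousLinearMap.toLinearMap_mul,
      ContinuousLinearMap.toLinearMap_sub,
      LinearMap.trace_sub_mul_sub_of_isIdempotentElem hGidem'
        (ContinuousLinearMap.IsIdempotentElem.toLinearMap hΥproj.isIdempotentElem), htrG, htrΥ,
      ← ContinuousLinearMap.toLinearMap_mul, ContinuousLinearMap.mul_def, htrGΥ]
    ring
  rw [Real.sqrt_le_left hη, htrace]
  simpa using two_mul_sub_two_mul_sum_le (sq_nonneg η) hover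

/-- Frobenius-norm closeness of the approximate ground space projector: if `G` and
`Υ = Σ_j |γ_j⟩⟨γ_j|` are rank-`g` orthogonal projectors with `⟨γ_j|G|γ_j⟩ ≥ 1 - η²/(2g)`,
then `‖G - Υ‖_F ≤ η`. -/
theorem projector_frobenius_close {E : Type*} [NormedAddCommGroup E]
    [InnerProductSpace ℂ E] [FiniteDimensional ℂ E]
    (G Υ : E →L[ℂ] E) (g : ℕ) (η : ℝ) (γ : Fin g → E)
    (hGsa : IsSelfAdjoint G) (hGidem : G ∘L G = G)
    (hGrank : Module.finrank ℂ (LinearMap.range (G : E →ₗ[ℂ] E)) = g)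
    (hγ : Orthonormal ℂ γ)
    (hΥ : ∀ x : E, Υ x = ∑ j, ⟪γ j, x⟫_ℂ • γ j)
    (hg : 1 ≤ g) (hη : 0 ≤ η)
    (hover : ∀ j, 1 - η ^ 2 / (2 * g) ≤ (⟪γ j, G (γ j)⟫_ℂ).re) :
    Real.sqrt ((LinearMap.trace ℂ E
      ((((G - Υ).adjoint ∘L (G - Υ)) : E →L[ℂ] E) : E →ₗ[ℂ] E)).re) ≤ η :=
  projector_frobenius_close_general G Υ g η γ hGsa hGidem hGrank hγ hΥ hη hover
end
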